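/- Let σ = τ_x and let u = δ + βy + γz with δ, β, γ ∈ O_K and ν_D(u) = 0 (note σ(u) = u, so u is a symmetric unit of O_D). Then δ ∈ O_K^× and there exists an invertible t ∈ D with u = σ(t)·δ·t; that is, ⟨u⟩ ≅ ⟨δ⟩ as hermitian forms over (D, τ_x). -/

import Mathlib

noncomputable section

/-- A surjective discrete valuation `ν : K → ℤ` on a field `K`
(the value of `ν` at `0` is irrelevant: only nonzero elements are constrained). -/
structure DVal (K : Type) [Field K] : Type where
  ν : K → ℤ
  ν_mul : ∀ x y : K, x ≠ 0 → y ≠ 0 → ν (x * y) = ν x + ν y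
  ν_add : ∀ x y : K, x ≠ 0 → y ≠ 0 → x + y ≠ 0 → min (ν x) (ν y) ≤ ν (x + y)
  ν_one : ν 1 = 0
  ν_surj : ∀ n : ℤ, ∃ x : K, x ≠ 0 ∧ ν x = n

namespace DVal

variable {K : Type} [Field K]

/-- `x` belongs to the valuation ring `O_K`. -/
def Int (V : DVal K) (x : K) : Prop := x = 0 ∨ 0 ≤ V.ν x

/-- `x` is a unit of the valuation ring `O_K`. -/
def IntUnit (V : DVal K) (x : K) : Prop := x ≠ 0 ∧ V.ν x = 0

/-- `x` belongs to the maximal ideal `m_K` of the valuation ring `O_K`. -/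
def MaxIdeal (V : DVal K) (x : K) : Prop := x = 0 ∨ 1 ≤ V.ν x

/-- `K` is complete with respect to the valuation `ν`: every Cauchy sequence converges. -/
def IsComplete (V : DVal K) : Prop :=
  ∀ f : ℕ → K,
    (∀ M : ℤ, ∃ N : ℕ, ∀ m n : ℕ, N ≤ m → N ≤ n →
      f m - f n = 0 ∨ M ≤ V.ν (f m - f n)) →
    ∃ L : K, ∀ M : ℤ, ∃ N : ℕ, ∀ n : ℕ, N ≤ n →
      f n - L = 0 ∨ M ≤ V.ν (f n - L)

/-- The residue field `k = O_K/m_K` has characteristic different from `2`,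
i.e. `2` is a unit of the valuation ring `O_K`. -/
def ResCharNeTwo (V : DVal K) : Prop := (2 : K) ≠ 0 ∧ V.ν 2 = 0

end DVal

/-- The reduced norm of a quaternion `u = δ + αx + βy + γz ∈ ℍ[K,a,b]`:
`Nrd u = u·τ(u) = δ² - aα² - bβ² + abγ²`. -/
def qnrd {K : Type} [Field K] (a b : K) (u : QuaternionAlgebra K a 0 b) : K :=
  u.re ^ 2 - a * u.imI ^ 2 - b * u.imJ ^ 2 + a * b * u.imK ^ 2

/-- The canonical involution `τ(δ + αx + βy + γz) = δ - αx - βy - γz` of `ℍ[K,a,b]`. -/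
def qtau {K : Type} [Field K] {a b : K} (u : QuaternionAlgebra K a 0 b) :
    QuaternionAlgebra K a 0 b :=
  ⟨u.re, -u.imI, -u.imJ, -u.imK⟩

/-- The norm form `⟨1,-a,-b,ab⟩` of `ℍ[K,a,b]` is anisotropic over `K`
(equivalently, `ℍ[K,a,b]` is a division ring). -/
def QAniso {K : Type} [Field K] (a b : K) : Prop :=
  ∀ d e f g : K, d ^ 2 - a * e ^ 2 - b * f ^ 2 + a * b * g ^ 2 = 0 →
    d = 0 ∧ e = 0 ∧ f = 0 ∧ g = 0

/-- The valuation `ν_D(u) = (1/2)·ν_K(Nrd u)` of the quaternion division algebra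
`D = ℍ[K,a,b]` (at nonzero `u`). -/
def qnu {K : Type} [Field K] (V : DVal K) (a b : K) (u : QuaternionAlgebra K a 0 b) : ℚ :=
  (V.ν (qnrd a b u) : ℚ) / 2

/-!
Since `x` anticommutes with `y` and `z`, every `t = c + β'y + γ'z` is fixed by `σ = τ_x`, and
`t² = c² + ϖ(β'² - aγ'²) + 2c(β'y + γ'z)`. Taking `β' = β/(2cδ)`, `γ' = γ/(2cδ)`, the equation
`u = σ(t)·δ·t = δt²` reduces to `(2c² - 1)² = 1 - ϖ(β² - aγ²)/δ²` in `K`. Here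
`Nrd u = δ² - ϖ(β² - aγ²)` is a unit and `ϖ(β² - aγ²) ∈ m_K`, so `δ` is a unit and the right-hand
side is a principal unit; `c` is then found by extracting two square roots of principal units,
which exist by Newton's iteration since `K` is complete and `2 ∈ O_K^×`.
-/

namespace DVal

variable {K : Type} [Field K]

/-- `x ∈ m_K^M`, with the convention `ν 0 = ∞`. -/
def LeVal (V : DVal K) (M : ℤ) (x : K) : Prop := x = 0 ∨ M ≤ V.ν x

variable {V : DVal K} {M N : ℤ} {x y : K}

lemma ν_neg_one : V.ν (-1 : K) = 0 := by
  have := V.ν_mul (-1) (-1) (by norm_num) (by norm_num)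
  rw [neg_one_mul, neg_neg, V.ν_one] at this
  omega

lemma ν_neg (hx : x ≠ 0) : V.ν (-x) = V.ν x := by
  rw [← neg_one_mul, V.ν_mul _ _ (by norm_num) hx, ν_neg_one, zero_add]

lemma ν_inv (hx : x ≠ 0) : V.ν x⁻¹ = -V.ν x := by
  have := V.ν_mul x x⁻¹ hx (inv_ne_zero hx)
  rw [mul_inv_cancel₀ hx, V.ν_one] at this
  omega

namespace LeVal

lemma mono (h : N ≤ M) (hx : V.LeVal M x) : V.LeVal N x :=
  hx.imp_right h.trans

lemma neg (hx : V.LeVal M x) : V.LeVal M (-x) := by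
  rcases eq_or_ne x 0 with rfl | hx0
  · exact Or.inl neg_zero
  · exact hx.imp (fun h => absurd h hx0) (fun h => (ν_neg hx0).symm ▸ h)

lemma add (hx : V.LeVal M x) (hy : V.LeVal M y) : V.LeVal M (x + y) := by
  rcases eq_or_ne x 0 with rfl | hx0
  · rwa [zero_add]
  rcases eq_or_ne y 0 with rfl | hy0
  · rwa [add_zero]
  rcases eq_or_ne (x + y) 0 with hxy | hxy
  · exact Or.inl hxy
  have := V.ν_add x y hx0 hy0 hxy
  rcases hx with hx | hx
  · exact absurd hx hx0
  rcases hy with hy | hy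
  · exact absurd hy hy0
  exact Or.inr (le_trans (le_min hx hy) this)

lemma sub (hx : V.LeVal M x) (hy : V.LeVal M y) : V.LeVal M (x - y) := by
  simpa only [sub_eq_add_neg] using hx.add hy.neg

lemma mul (hx : V.LeVal M x) (hy : V.LeVal N y) : V.LeVal (M + N) (x * y) := by
  rcases eq_or_ne x 0 with rfl | hx0
  · exact Or.inl (zero_mul y)
  rcases eq_or_ne y 0 with rfl | hy0
  · exact Or.inl (mul_zero x)
  rcases hx with hx | hx
  · exact absurd hx hx0
  rcases hy with hy | hy
  · exact absurd hy hy0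
  exact Or.inr (by rw [V.ν_mul x y hx0 hy0]; omega)

end LeVal

lemma eq_zero_of_forall_leVal (h : ∀ M, V.LeVal M x) : x = 0 :=
  (h (V.ν x + 1)).resolve_right (by omega)

namespace IntUnit

lemma leVal_zero (hx : V.IntUnit x) : V.LeVal 0 x := Or.inr hx.2.ge

lemma inv (hx : V.IntUnit x) : V.IntUnit x⁻¹ :=
  ⟨inv_ne_zero hx.1, by rw [ν_inv hx.1, hx.2, neg_zero]⟩

lemma mul (hx : V.IntUnit x) (hy : V.IntUnit y) : V.IntUnit (x * y) :=
  ⟨mul_ne_zero hx.1 hy.1, by rw [V.ν_mul x y hx.1 hy.1, hx.2, hy.2, add_zero]⟩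

lemma add_leVal_one (hx : V.IntUnit x) (hy : V.LeVal 1 y) : V.IntUnit (x + y) := by
  have hxy : x + y ≠ 0 := by
    intro h
    rw [eq_neg_of_add_eq_zero_right h] at hy
    rcases hy.neg with hy | hy
    · exact hx.1 (by simpa using hy)
    · rw [neg_neg, hx.2] at hy; omega
  refine ⟨hxy, le_antisymm ?_ ?_⟩
  · rcases eq_or_ne y 0 with rfl | hy0
    · rw [add_zero, hx.2]
    have := V.ν_add (x + y) (-y) hxy (neg_ne_zero.mpr hy0) (by simpa using hx.1)
    rw [add_neg_cancel_right, hx.2, ν_neg hy0] at this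
    rcases hy with hy | hy
    · exact absurd hy hy0
    omega
  · simpa using ((hx.leVal_zero.add (hy.mono zero_le_one)) : V.LeVal 0 (x + y)).resolve_left hxy

end IntUnit

lemma LeVal.div_intUnit (hx : V.LeVal M x) (hy : V.IntUnit y) : V.LeVal M (x / y) := by
  simpa only [div_eq_mul_inv, add_zero] using hx.mul hy.inv.leVal_zero

lemma intUnit_of_leVal_sub_one (hx : V.LeVal 1 (x - 1)) : V.IntUnit x := by
  simpa using (show V.IntUnit (1 : K) from ⟨one_ne_zero, V.ν_one⟩).add_leVal_one hx

lemma intUnit_of_sq (hx : V.IntUnit (x ^ 2)) : V.IntUnit x := by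
  have hx0 : x ≠ 0 := fun h => hx.1 (by rw [h]; ring)
  refine ⟨hx0, ?_⟩
  have := hx.2
  rw [sq, V.ν_mul x x hx0 hx0] at this
  omega

def sqrtNewton (ξ : K) : ℕ → K
  | 0 => 1
  | n + 1 => sqrtNewton ξ n - (sqrtNewton ξ n ^ 2 - ξ) / (2 * sqrtNewton ξ n)

lemma sqrtNewton_spec (h2 : V.IntUnit 2) {ξ : K} (hξ : V.LeVal 1 (ξ - 1)) (n : ℕ) :
    V.LeVal 1 (sqrtNewton ξ n - 1) ∧ V.LeVal (n + 1) (sqrtNewton ξ n ^ 2 - ξ) := by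
  induction n with
  | zero =>
    refine ⟨Or.inl (sub_self 1), ?_⟩
    simpa [sqrtNewton] using hξ.neg
  | succ n ih =>
    set c := sqrtNewton ξ n
    set d := (c ^ 2 - ξ) / (2 * c)
    have hc : V.IntUnit c := intUnit_of_leVal_sub_one ih.1
    have hd : V.LeVal (n + 1) d := ih.2.div_intUnit (h2.mul hc)
    -- the new error is the square of the Newton correction
    have hsq : (c - d) ^ 2 - ξ = d * d := by
      simp only [d]
      field_simp [h2.1, hc.1]
      ring
    have hnext : sqrtNewton ξ (n + 1) = c - d := rfl
    rw [hnext, sub_right_comm, hsq]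
    exact ⟨ih.1.sub (hd.mono (by omega)), (hd.mul hd).mono (by push_cast; omega)⟩

lemma leVal_sub_of_leVal_succ_sub {f : ℕ → K} (h : ∀ n : ℕ, V.LeVal n (f (n + 1) - f n))
    (n k : ℕ) : V.LeVal n (f (n + k) - f n) := by
  induction k with
  | zero => exact Or.inl (by simp)
  | succ k ih =>
    rw [← add_assoc, ← sub_add_sub_cancel _ (f (n + k))]
    exact ((h (n + k)).mono (by omega)).add ih

theorem exists_sq_eq_of_leVal_sub_one (hcomp : V.IsComplete) (hchar : V.ResCharNeTwo) {ξ : K}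
    (hξ : V.LeVal 1 (ξ - 1)) : ∃ c : K, V.LeVal 1 (c - 1) ∧ c ^ 2 = ξ := by
  have h2 : V.IntUnit (2 : K) := hchar
  set f := sqrtNewton ξ
  have hspec := sqrtNewton_spec h2 hξ
  have hstep (n : ℕ) : V.LeVal n (f (n + 1) - f n) := by
    have hd := (hspec n).2.div_intUnit (h2.mul (intUnit_of_leVal_sub_one (hspec n).1))
    simpa [f, sqrtNewton] using hd.neg.mono (by omega)
  have hcauchy (M : ℤ) : ∃ N : ℕ, ∀ m n : ℕ, N ≤ m → N ≤ n → V.LeVal M (f m - f n) := by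
    refine ⟨M.toNat, fun m n hm hn => ?_⟩
    obtain ⟨i, rfl⟩ := Nat.exists_eq_add_of_le hm
    obtain ⟨j, rfl⟩ := Nat.exists_eq_add_of_le hn
    have := (leVal_sub_of_leVal_succ_sub hstep M.toNat i).sub
      (leVal_sub_of_leVal_succ_sub hstep M.toNat j)
    rw [sub_sub_sub_cancel_right] at this
    exact this.mono (by omega)
  obtain ⟨L, hL⟩ := hcomp f hcauchy
  have hL1 : V.LeVal 1 (L - 1) := by
    obtain ⟨N, hN⟩ := hL 1
    have := (hspec N).1.sub (hN N le_rfl)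
    rwa [sub_sub_sub_cancel_left] at this
  refine ⟨L, hL1, sub_eq_zero.mp (eq_zero_of_forall_leVal (V := V) fun M => ?_)⟩
  obtain ⟨N, hN⟩ := hL M
  set n := max N M.toNat
  have hfn : V.LeVal M (f n - L) := hN n (le_max_left _ _)
  have hsum : V.LeVal 0 (f n + L) :=
    (intUnit_of_leVal_sub_one (hspec n).1).leVal_zero.add (intUnit_of_leVal_sub_one hL1).leVal_zero
  have hprod : V.LeVal M ((f n - L) * (f n + L)) := by simpa only [add_zero] using hfn.mul hsum
  convert ((hspec n).2.mono (by omega : M ≤ (n : ℤ) + 1)).sub hprod using 1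
  ring

theorem exists_intUnit_two_mul_sq_sub_one_sq_eq (hcomp : V.IsComplete) (hchar : V.ResCharNeTwo)
    {ε : K} (hε : V.LeVal 1 ε) : ∃ c : K, V.IntUnit c ∧ (2 * c ^ 2 - 1) ^ 2 = 1 - ε := by
  have h2 : V.IntUnit (2 : K) := hchar
  have h20 : (2 : K) ≠ 0 := h2.1
  obtain ⟨r, hr1, hr⟩ := exists_sq_eq_of_leVal_sub_one hcomp hchar (ξ := 1 - ε)
    (by simpa using hε.neg)
  obtain ⟨c, hc1, hc⟩ := exists_sq_eq_of_leVal_sub_one hcomp hchar (ξ := (1 + r) / 2)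
    (by convert hr1.div_intUnit h2 using 1; field_simp; ring)
  refine ⟨c, intUnit_of_leVal_sub_one hc1, ?_⟩
  rw [hc, ← hr]
  field_simp
  ring

end DVal

section Quaternion

variable {K : Type} [Field K] {a b : K}

lemma isUnit_of_qnrd_ne_zero {u : QuaternionAlgebra K a 0 b} (h : qnrd a b u ≠ 0) : IsUnit u := by
  refine ⟨⟨u, (qnrd a b u)⁻¹ • qtau u, ?_, ?_⟩, rfl⟩ <;>
  · ext <;> simp only [qnrd] at h <;> simp [qtau, qnrd] <;> field_simp <;> ring

lemma x_mul_qtau_of_imI_eq_zero {t : QuaternionAlgebra K a 0 b} (ht : t.imI = 0) :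
    (⟨0, 1, 0, 0⟩ : QuaternionAlgebra K a 0 b) * qtau t = t * ⟨0, 1, 0, 0⟩ := by
  ext <;> simp [qtau, ht]

lemma mk_zero_mul_self (c p q : K) :
    (⟨c, 0, p, q⟩ : QuaternionAlgebra K a 0 b) * ⟨c, 0, p, q⟩ =
      ⟨c ^ 2 + b * p ^ 2 - a * b * q ^ 2, 0, 2 * c * p, 2 * c * q⟩ := by
  ext <;> simp <;> ring

theorem exists_imI_eq_zero_coe_mul_self_eq {V : DVal K} (hcomp : V.IsComplete)
    (hchar : V.ResCharNeTwo) {δ β γ : K} (hδ : V.IntUnit δ)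
    (hs : V.LeVal 1 (b * (β ^ 2 - a * γ ^ 2))) :
    ∃ t : QuaternionAlgebra K a 0 b,
      t.imI = 0 ∧ (δ : QuaternionAlgebra K a 0 b) * (t * t) = ⟨δ, 0, β, γ⟩ := by
  obtain ⟨c, hc, hc2⟩ :=
    DVal.exists_intUnit_two_mul_sq_sub_one_sq_eq hcomp hchar (hs.div_intUnit (hδ.mul hδ))
  refine ⟨⟨c, 0, β * (2 * c * δ)⁻¹, γ * (2 * c * δ)⁻¹⟩, rfl, ?_⟩
  rw [mk_zero_mul_self, QuaternionAlgebra.coe_mul_eq_smul]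
  have hδ0 := hδ.1
  have hc0 := hc.1
  have h20 : (2 : K) ≠ 0 := hchar.1
  field_simp at hc2
  ext <;> simp <;> field_simp
  linear_combination hc2

end Quaternion

theorem stmt_6_general (K : Type) [Field K] (V : DVal K)
    -- K is complete with residue field of characteristic ≠ 2
    (hcomp : V.IsComplete) (hchar : V.ResCharNeTwo)
    -- D = ℍ[K,a,ϖ] with a ∈ O_K^×, ϖ a uniformizer, D a division ring
    (a ϖ : K) (hva : V.ν a = 0) (hvϖ : V.ν ϖ = 1)
    (haniso : QAniso a ϖ)
    -- σ = τ_x (μ = λ⁻¹)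
    (mu : QuaternionAlgebra K a 0 ϖ)
    (hmu : (⟨0, 1, 0, 0⟩ : QuaternionAlgebra K a 0 ϖ) * mu = 1)
    (σ : QuaternionAlgebra K a 0 ϖ → QuaternionAlgebra K a 0 ϖ)
    (hσ : ∀ u, σ u = (⟨0, 1, 0, 0⟩ : QuaternionAlgebra K a 0 ϖ) * qtau u * mu)
    -- u = δ + βy + γz with coordinates in O_K and ν_D(u) = 0
    (δ β γ : K) (hβ : V.Int β) (hγ : V.Int γ)
    (hu0 : (⟨δ, 0, β, γ⟩ : QuaternionAlgebra K a 0 ϖ) ≠ 0)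
    (hval : qnu V a ϖ (⟨δ, 0, β, γ⟩ : QuaternionAlgebra K a 0 ϖ) = 0) :
    V.IntUnit δ ∧ ∃ t : QuaternionAlgebra K a 0 ϖ, IsUnit t ∧
      (⟨δ, 0, β, γ⟩ : QuaternionAlgebra K a 0 ϖ) =
        σ t * (⟨δ, 0, 0, 0⟩ : QuaternionAlgebra K a 0 ϖ) * t := by
  set u : QuaternionAlgebra K a 0 ϖ := ⟨δ, 0, β, γ⟩
  set s := ϖ * (β ^ 2 - a * γ ^ 2)
  have hs : V.LeVal 1 s := by
    have hϖ : V.LeVal 1 ϖ := Or.inr hvϖ.ge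
    have ha : V.LeVal 0 a := Or.inr hva.ge
    have hβ' : V.LeVal 0 β := hβ
    have hγ' : V.LeVal 0 γ := hγ
    simpa only [s, sq, add_zero] using hϖ.mul ((hβ'.mul hβ').sub (ha.mul (hγ'.mul hγ')))
  have hnrd0 : qnrd a ϖ u ≠ 0 := by
    intro h
    obtain ⟨rfl, -, rfl, rfl⟩ := haniso δ 0 β γ h
    exact hu0 rfl
  have hnrd : qnrd a ϖ u = δ ^ 2 - s := by
    simp only [qnrd, u, s]
    ring
  have hnrd_unit : V.IntUnit (δ ^ 2 - s) := by
    refine hnrd ▸ ⟨hnrd0, ?_⟩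
    simpa [qnu] using hval
  have hδ : V.IntUnit δ := DVal.intUnit_of_sq (by simpa using hnrd_unit.add_leVal_one hs)
  obtain ⟨t, ht, htu⟩ := exists_imI_eq_zero_coe_mul_self_eq hcomp hchar hδ hs
  have hσt : σ t = t := by rw [hσ, x_mul_qtau_of_imI_eq_zero ht, mul_assoc, hmu, mul_one]
  have hut : u = σ t * (δ : QuaternionAlgebra K a 0 ϖ) * t := by
    rw [hσt, ← QuaternionAlgebra.coe_commutes, mul_assoc]
    exact htu.symm
  refine ⟨hδ, t, ?_, hut⟩
  have hδtt : IsUnit ((δ : QuaternionAlgebra K a 0 ϖ) * (t * t)) :=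
    htu ▸ isUnit_of_qnrd_ne_zero hnrd0
  have hcomm : Commute (δ : QuaternionAlgebra K a 0 ϖ) (t * t) :=
    QuaternionAlgebra.coe_commutes δ (t * t)
  exact isUnit_mul_self_iff.mp (hcomm.isUnit_mul_iff.mp hδtt).2

/-- if `u = δ + βy + γz` is a symmetric unit of `O_D` for `σ = τ_x` then
`δ ∈ O_K^×` and `⟨u⟩ ≅ ⟨δ⟩` over `(D, τ_x)`. -/
theorem stmt_6 (K : Type) [Field K] (V : DVal K)
    -- K is complete with residue field of characteristic ≠ 2
    (hcomp : V.IsComplete) (hchar : V.ResCharNeTwo)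
    -- D = ℍ[K,a,ϖ] with a ∈ O_K^×, ϖ a uniformizer, D a division ring
    (a ϖ : K) (ha0 : a ≠ 0) (hva : V.ν a = 0) (hϖ0 : ϖ ≠ 0) (hvϖ : V.ν ϖ = 1)
    (haniso : QAniso a ϖ)
    -- σ = τ_x (μ = λ⁻¹)
    (mu : QuaternionAlgebra K a 0 ϖ)
    (hmu : (⟨0, 1, 0, 0⟩ : QuaternionAlgebra K a 0 ϖ) * mu = 1) (hmu' : mu * (⟨0, 1, 0, 0⟩ : QuaternionAlgebra K a 0 ϖ) = 1)
    (σ : QuaternionAlgebra K a 0 ϖ → QuaternionAlgebra K a 0 ϖ)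
    (hσ : ∀ u, σ u = (⟨0, 1, 0, 0⟩ : QuaternionAlgebra K a 0 ϖ) * qtau u * mu)
    -- u = δ + βy + γz with coordinates in O_K and ν_D(u) = 0
    (δ β γ : K) (hδ : V.Int δ) (hβ : V.Int β) (hγ : V.Int γ)
    (hu0 : (⟨δ, 0, β, γ⟩ : QuaternionAlgebra K a 0 ϖ) ≠ 0)
    (hval : qnu V a ϖ (⟨δ, 0, β, γ⟩ : QuaternionAlgebra K a 0 ϖ) = 0) :
    V.IntUnit δ ∧ ∃ t : QuaternionAlgebra K a 0 ϖ, IsUnit t ∧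
      (⟨δ, 0, β, γ⟩ : QuaternionAlgebra K a 0 ϖ) =
        σ t * (⟨δ, 0, 0, 0⟩ : QuaternionAlgebra K a 0 ϖ) * t :=
  stmt_6_general K V hcomp hchar a ϖ hva hvϖ haniso mu hmu σ hσ δ β γ hβ hγ hu0 hval
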